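/- Let i : B → A be a k-linear X-functor from a diagonal k-linear category B to a k-linear category A. Fix x ∈ X and assume that A_{xx} is faithfully flat as a left B_x-module. Then for every family N ∈ D_k(X)_B of right B_x-modules, the unit map η^N_x : N_x → GF(N)_x = {Σ_i n_i ⊗ a_i ∈ N_x ⊗_{B_x} A_{xx} | Σ_i n_i ⊗ 1_x ⊗ a_i = Σ_i n_i ⊗ a_i ⊗ 1_x in N_x ⊗_{B_x} A_{xx} ⊗_{B_x} A_{xx}}, given by η^N_x(n) = n ⊗_{B_x} 1_x, is bijective. -/

import Mathlib

open TensorProduct BigOperators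
noncomputable section
namespace Paper
variable (k : Type) [CommRing k]

-- [CORE assumed]
structure KCat (X : Type) where
  M : X → X → Type
  [acg : ∀ x y, AddCommGroup (M x y)]
  [mod : ∀ x y, Module k (M x y)]
  mul : ∀ {x y z : X}, M x y → M y z → M x z
  one : ∀ x : X, M x x
  add_mul : ∀ {x y z : X} (a a' : M x y) (b : M y z), mul (a + a') b = mul a b + mul a' b
  smul_mul : ∀ {x y z : X} (c : k) (a : M x y) (b : M y z), mul (c • a) b = c • mul a b
  mul_add : ∀ {x y z : X} (a : M x y) (b b' : M y z), mul a (b + b') = mul a b + mul a b'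
  mul_smul : ∀ {x y z : X} (c : k) (a : M x y) (b : M y z), mul a (c • b) = c • mul a b
  mul_assoc : ∀ {x y z w : X} (a : M x y) (b : M y z) (c : M z w),
    mul (mul a b) c = mul a (mul b c)
  one_mul : ∀ {x y : X} (a : M x y), mul (one x) a = a
  mul_one : ∀ {x y : X} (a : M x y), mul a (one y) = a
attribute [instance] KCat.acg KCat.mod
variable {k}
def KCat.mulLin {X : Type} (A : KCat k X) (x y z : X) :
    A.M x y →ₗ[k] A.M y z →ₗ[k] A.M x z :=
  LinearMap.mk₂ k A.mul A.add_mul A.smul_mul A.mul_add A.mul_smul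
@[simp] theorem KCat.mulLin_apply {X : Type} (A : KCat k X) (x y z : X)
    (a : A.M x y) (b : A.M y z) : A.mulLin x y z a b = A.mul a b := rfl
variable (k)
def relSub {S M N : Type} [AddCommGroup M] [Module k M] [AddCommGroup N] [Module k N]
    (ρ : M → S → M) (lam : S → N → N) : Submodule k (M ⊗[k] N) :=
  Submodule.span k {t | ∃ m b n, t = ρ m b ⊗ₜ[k] n - m ⊗ₜ[k] lam b n}
abbrev BT {S M N : Type} [AddCommGroup M] [Module k M] [AddCommGroup N] [Module k N]
    (ρ : M → S → M) (lam : S → N → N) : Type :=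
  (M ⊗[k] N) ⧸ relSub k ρ lam
def btmk {S M N : Type} [AddCommGroup M] [Module k M] [AddCommGroup N] [Module k N]
    (ρ : M → S → M) (lam : S → N → N) : M →ₗ[k] N →ₗ[k] BT k ρ lam :=
  (TensorProduct.mk k M N).compr₂ (relSub k ρ lam).mkQ
theorem btmk_rel {S M N : Type} [AddCommGroup M] [Module k M] [AddCommGroup N] [Module k N]
    (ρ : M → S → M) (lam : S → N → N) (m : M) (b : S) (n : N) :
    btmk k ρ lam (ρ m b) n = btmk k ρ lam m (lam b n) := by
  show (relSub k ρ lam).mkQ _ = (relSub k ρ lam).mkQ _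
  rw [Submodule.mkQ_apply, Submodule.mkQ_apply, Submodule.Quotient.eq]
  exact Submodule.subset_span ⟨m, b, n, rfl⟩
def btDesc {S M N P : Type} [AddCommGroup M] [Module k M] [AddCommGroup N] [Module k N]
    [AddCommGroup P] [Module k P]
    (ρ : M → S → M) (lam : S → N → N) (f : M →ₗ[k] N →ₗ[k] P)
    (hf : ∀ m b n, f (ρ m b) n = f m (lam b n)) :
    BT k ρ lam →ₗ[k] P :=
  Submodule.liftQ _ (TensorProduct.lift f) (by
    rw [relSub, Submodule.span_le]
    rintro t ⟨m, b, n, rfl⟩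
    simp [SetLike.mem_coe, LinearMap.mem_ker, map_sub, hf m b n])
@[simp] theorem btDesc_mk {S M N P : Type} [AddCommGroup M] [Module k M] [AddCommGroup N]
    [Module k N] [AddCommGroup P] [Module k P]
    (ρ : M → S → M) (lam : S → N → N) (f : M →ₗ[k] N →ₗ[k] P)
    (hf : ∀ m b n, f (ρ m b) n = f m (lam b n)) (m : M) (n : N) :
    btDesc k ρ lam f hf (btmk k ρ lam m n) = f m n := by
  simp [btDesc, btmk, LinearMap.compr₂_apply, TensorProduct.mk_apply]
-- [END CORE]

/-- A diagonal `k`-linear category: a family of (not necessarily commutative,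
associative, unital) `k`-algebras indexed by `X`. -/
structure DiagAlg (X : Type) where
  C : X → Type
  [acg : ∀ x, AddCommGroup (C x)]
  [mod : ∀ x, Module k (C x)]
  mul : ∀ {x : X}, C x → C x → C x
  one : ∀ x : X, C x
  add_mul : ∀ {x : X} (a a' b : C x), mul (a + a') b = mul a b + mul a' b
  smul_mul : ∀ {x : X} (c : k) (a b : C x), mul (c • a) b = c • mul a b
  mul_add : ∀ {x : X} (a b b' : C x), mul a (b + b') = mul a b + mul a b'
  mul_smul : ∀ {x : X} (c : k) (a b : C x), mul a (c • b) = c • mul a b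
  mul_assoc : ∀ {x : X} (a b c : C x), mul (mul a b) c = mul a (mul b c)
  one_mul : ∀ {x : X} (a : C x), mul (one x) a = a
  mul_one : ∀ {x : X} (a : C x), mul a (one x) = a

attribute [instance] DiagAlg.acg DiagAlg.mod

variable {k}

/-- A `k`-linear `X`-functor from a diagonal category `B` to `A`: a family of
`k`-algebra maps `i x : B x → A x x`. -/
structure XFun {X : Type} (B : DiagAlg k X) (A : KCat k X) where
  i : ∀ x, B.C x →ₗ[k] A.M x x
  i_mul : ∀ x (b b' : B.C x), i x (B.mul b b') = A.mul (i x b) (i x b')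
  i_one : ∀ x, i x (B.one x) = A.one x

/-- A family of right `B_x`-modules (an object of `D_k(X)` with right `B`-action). -/
structure DModData {X : Type} (B : DiagAlg k X) where
  N : X → Type
  [acg : ∀ x, AddCommGroup (N x)]
  [mod : ∀ x, Module k (N x)]
  ract : ∀ {x : X}, N x → B.C x → N x

attribute [instance] DModData.acg DModData.mod

/-- The axioms making `Nd` an object of `D_k(X)_B`. -/
structure IsDMod {X : Type} {B : DiagAlg k X} (Nd : DModData B) : Prop where
  add_ract : ∀ {x : X} (n n' : Nd.N x) (b : B.C x), Nd.ract (n + n') b = Nd.ract n b + Nd.ract n' b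
  ract_add : ∀ {x : X} (n : Nd.N x) (b b' : B.C x), Nd.ract n (b + b') = Nd.ract n b + Nd.ract n b'
  smul_ract : ∀ {x : X} (c : k) (n : Nd.N x) (b : B.C x), Nd.ract (c • n) b = c • Nd.ract n b
  ract_smul : ∀ {x : X} (c : k) (n : Nd.N x) (b : B.C x), Nd.ract n (c • b) = c • Nd.ract n b
  ract_assoc : ∀ {x : X} (n : Nd.N x) (b b' : B.C x),
    Nd.ract (Nd.ract n b) b' = Nd.ract n (B.mul b b')
  ract_one : ∀ {x : X} (n : Nd.N x), Nd.ract n (B.one x) = n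

/-- Morphisms in `D_k(X)_B`. -/
structure IsDModHom {X : Type} {B : DiagAlg k X} (Nd Nd' : DModData B)
    (g : ∀ x, Nd.N x → Nd'.N x) : Prop where
  map_add : ∀ x (n n' : Nd.N x), g x (n + n') = g x n + g x n'
  map_smul : ∀ x (c : k) (n : Nd.N x), g x (c • n) = c • g x n
  map_ract : ∀ x (n : Nd.N x) (b : B.C x), g x (Nd.ract n b) = Nd'.ract (g x n) b

/-- A right module (in `M_k(X)`) over the `k`-linear category `A` (data only). -/
structure RModData {X : Type} (A : KCat k X) where
  M : X → X → Type
  [acg : ∀ x y, AddCommGroup (M x y)]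
  [mod : ∀ x y, Module k (M x y)]
  act : ∀ {x y z : X}, M x y → A.M y z → M x z

attribute [instance] RModData.acg RModData.mod

/-- The axioms of a right `A`-module. -/
structure IsRMod {X : Type} {A : KCat k X} (Md : RModData A) : Prop where
  add_act : ∀ {x y z : X} (m m' : Md.M x y) (a : A.M y z), Md.act (m + m') a = Md.act m a + Md.act m' a
  act_add : ∀ {x y z : X} (m : Md.M x y) (a a' : A.M y z), Md.act m (a + a') = Md.act m a + Md.act m a'
  smul_act : ∀ {x y z : X} (c : k) (m : Md.M x y) (a : A.M y z), Md.act (c • m) a = c • Md.act m a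
  act_smul : ∀ {x y z : X} (c : k) (m : Md.M x y) (a : A.M y z), Md.act m (c • a) = c • Md.act m a
  act_assoc : ∀ {x y z w : X} (m : Md.M x y) (a : A.M y z) (b : A.M z w),
    Md.act (Md.act m a) b = Md.act m (A.mul a b)
  act_one : ∀ {x y : X} (m : Md.M x y), Md.act m (A.one y) = m

/-- Morphisms of right `A`-modules. -/
structure IsRModHom {X : Type} {A : KCat k X} (Md Md' : RModData A)
    (f : ∀ x y, Md.M x y → Md'.M x y) : Prop where
  map_add : ∀ x y (m m' : Md.M x y), f x y (m + m') = f x y m + f x y m'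
  map_smul : ∀ x y (c : k) (m : Md.M x y), f x y (c • m) = c • f x y m
  map_act : ∀ x y z (m : Md.M x y) (a : A.M y z), f x z (Md.act m a) = Md'.act (f x y m) a

section Descent

variable {X : Type} (A : KCat k X) (B : DiagAlg k X) (F : XFun B A)

/-- `M_{xx} ⊗_{B_x} A_{xy}`, for a right `A`-module `M`, where `B` acts via `i = F.i`. -/
abbrev DTc (Md : RModData A) (x y : X) : Type :=
  BT k (fun (m : Md.M x x) (b : B.C x) => Md.act m (F.i x b))
       (fun (b : B.C x) (a : A.M x y) => A.mul (F.i x b) a)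

abbrev dtmk (Md : RModData A) (x y : X) :
    Md.M x x →ₗ[k] A.M x y →ₗ[k] DTc A B F Md x y :=
  btmk k _ _

/-- Right multiplication by `a : A_{yz}` on the second factor of `M_{xx} ⊗_{B_x} A_{xy}`. -/
def dtRmul (Md : RModData A) {x y z : X} (a : A.M y z) :
    DTc A B F Md x y →ₗ[k] DTc A B F Md x z :=
  btDesc k _ _ ((dtmk A B F Md x z).compl₂ ((A.mulLin x y z).flip a)) (by
    intro m b a'
    simp only [LinearMap.compl₂_apply, LinearMap.flip_apply, KCat.mulLin_apply]
    rw [A.mul_assoc]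
    exact btmk_rel k _ _ m b (A.mul a' a))

@[simp] theorem dtRmul_mk (Md : RModData A) {x y z : X} (a : A.M y z)
    (m : Md.M x x) (a' : A.M x y) :
    dtRmul A B F Md a (dtmk A B F Md x y m a') = dtmk A B F Md x z m (A.mul a' a) := by
  simp [dtRmul]

/-- `(M_{xx} ⊗_{B_x} A_{xx}) ⊗_{B_x} A_{xy}`. -/
abbrev DT2c (Md : RModData A) (x y : X) : Type :=
  BT k (fun (t : DTc A B F Md x x) (b : B.C x) => dtRmul A B F Md (F.i x b) t)
       (fun (b : B.C x) (a : A.M x y) => A.mul (F.i x b) a)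

abbrev dt2mk (Md : RModData A) (x y : X) :
    DTc A B F Md x x →ₗ[k] A.M x y →ₗ[k] DT2c A B F Md x y :=
  btmk k _ _

/-- A descent datum: a right `A`-module together with the maps `σ_{xy}`. -/
structure DescData where
  Md : RModData A
  sig : ∀ (x y : X), Md.M x y → DTc A B F Md x y

/-- The axioms of a descent datum.  The conditions `c2` and `c3` are expressed via
(arbitrary) representatives `σ_{xy}(m) = ∑ⱼ m0 j ⊗ m1 j` of the element `σ_{xy}(m)`
of the balanced tensor product. -/
structure IsDesc (D : DescData A B F) : Prop where
  mod : IsRMod D.Md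
  sig_add : ∀ x y (m m' : D.Md.M x y), D.sig x y (m + m') = D.sig x y m + D.sig x y m'
  sig_smul : ∀ x y (c : k) (m : D.Md.M x y), D.sig x y (c • m) = c • D.sig x y m
  c1 : ∀ x y z (m : D.Md.M x y) (a : A.M y z),
    D.sig x z (D.Md.act m a) = dtRmul A B F D.Md a (D.sig x y m)
  c2 : ∀ x y (m : D.Md.M x y) (n : ℕ) (m0 : Fin n → D.Md.M x x) (m1 : Fin n → A.M x y),
    D.sig x y m = ∑ j, dtmk A B F D.Md x y (m0 j) (m1 j) →
    ∑ j, dt2mk A B F D.Md x y (D.sig x x (m0 j)) (m1 j)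
      = ∑ j, dt2mk A B F D.Md x y (dtmk A B F D.Md x x (m0 j) (A.one x)) (m1 j)
  c3 : ∀ x y (m : D.Md.M x y) (n : ℕ) (m0 : Fin n → D.Md.M x x) (m1 : Fin n → A.M x y),
    D.sig x y m = ∑ j, dtmk A B F D.Md x y (m0 j) (m1 j) →
    ∑ j, D.Md.act (m0 j) (m1 j) = m

/-- Morphisms of descent data. -/
structure IsDescHom (D D' : DescData A B F) (f : ∀ x y, D.Md.M x y → D'.Md.M x y) : Prop where
  mod : IsRModHom D.Md D'.Md f
  compat : ∀ x y (m : D.Md.M x y) (n : ℕ) (m0 : Fin n → D.Md.M x x) (m1 : Fin n → A.M x y),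
    D.sig x y m = ∑ j, dtmk A B F D.Md x y (m0 j) (m1 j) →
    D'.sig x y (f x y m) = ∑ j, dtmk A B F D'.Md x y (f x x (m0 j)) (m1 j)

/-- `G(M)_x = { m ∈ M_{xx} | σ_{xx}(m) = m ⊗ 1_x }`. -/
def Gset (D : DescData A B F) (x : X) : Set (D.Md.M x x) :=
  {m | D.sig x x m = dtmk A B F D.Md x x m (A.one x)}

/-- `N_x ⊗_{B_x} A_{xy}` for a diagonal right `B`-module `N`. -/
abbrev FTc (Nd : DModData B) (x y : X) : Type :=
  BT k (fun (n : Nd.N x) (b : B.C x) => Nd.ract n b)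
       (fun (b : B.C x) (a : A.M x y) => A.mul (F.i x b) a)

abbrev ftmk (Nd : DModData B) (x y : X) :
    Nd.N x →ₗ[k] A.M x y →ₗ[k] FTc A B F Nd x y :=
  btmk k _ _

/-- The right `A`-action `(n ⊗ a)·b := n ⊗ ab` on `F(N)`. -/
def ftRmul (Nd : DModData B) {x y z : X} (a : A.M y z) :
    FTc A B F Nd x y →ₗ[k] FTc A B F Nd x z :=
  btDesc k _ _ ((ftmk A B F Nd x z).compl₂ ((A.mulLin x y z).flip a)) (by
    intro m b a'
    simp only [LinearMap.compl₂_apply, LinearMap.flip_apply, KCat.mulLin_apply]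
    rw [A.mul_assoc]
    exact btmk_rel k _ _ m b (A.mul a' a))

@[simp] theorem ftRmul_mk (Nd : DModData B) {x y z : X} (a : A.M y z)
    (n : Nd.N x) (a' : A.M x y) :
    ftRmul A B F Nd a (ftmk A B F Nd x y n a') = ftmk A B F Nd x z n (A.mul a' a) := by
  simp [ftRmul]

/-- The right `A`-module `F(N)`. -/
def FNMod (Nd : DModData B) : RModData A where
  M := FTc A B F Nd
  act := fun {x y z} t a => ftRmul A B F Nd a t

@[simp] theorem FNMod_act (Nd : DModData B) {x y z : X} (t : FTc A B F Nd x y) (a : A.M y z) :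
    (FNMod A B F Nd).act t a = ftRmul A B F Nd a t := rfl

/-- `n ↦ n ⊗ 1_x` as a linear map `N_x → F(N)_{xx}`. -/
def etaLin (Nd : DModData B) (x : X) : Nd.N x →ₗ[k] FTc A B F Nd x x where
  toFun := fun n => ftmk A B F Nd x x n (A.one x)
  map_add' := by intro n n'; simp [map_add]
  map_smul' := by intro c n; simp [map_smul]

@[simp] theorem etaLin_apply (Nd : DModData B) (x : X) (n : Nd.N x) :
    etaLin A B F Nd x n = ftmk A B F Nd x x n (A.one x) := rfl

/-- The descent map `σ_{xy}(n ⊗ a) = (n ⊗ 1_x) ⊗ a` of `F(N)`. -/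
def FNsig (Nd : DModData B) (x y : X) :
    FTc A B F Nd x y →ₗ[k] DTc A B F (FNMod A B F Nd) x y :=
  btDesc k (fun (n : Nd.N x) (b : B.C x) => Nd.ract n b)
    (fun (b : B.C x) (a : A.M x y) => A.mul (F.i x b) a)
    ((dtmk A B F (FNMod A B F Nd) x y).comp (etaLin A B F Nd x)) (by
    intro n b a
    show (dtmk A B F (FNMod A B F Nd) x y) (ftmk A B F Nd x x (Nd.ract n b) (A.one x)) a
      = (dtmk A B F (FNMod A B F Nd) x y) (ftmk A B F Nd x x n (A.one x)) (A.mul (F.i x b) a)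
    rw [btmk_rel k _ _ n b (A.one x), A.mul_one]
    have h2 := btmk_rel k
      (fun (t : (FNMod A B F Nd).M x x) (b : B.C x) => (FNMod A B F Nd).act t (F.i x b))
      (fun (b : B.C x) (a : A.M x y) => A.mul (F.i x b) a)
      (ftmk A B F Nd x x n (A.one x)) b a
    rw [← h2]
    have h3 : (FNMod A B F Nd).act (ftmk A B F Nd x x n (A.one x)) (F.i x b)
        = ftmk A B F Nd x x n (F.i x b) := by
      show ftRmul A B F Nd (F.i x b) (ftmk A B F Nd x x n (A.one x)) = _
      rw [ftRmul_mk, A.one_mul]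
    rw [h3])

@[simp] theorem FNsig_mk (Nd : DModData B) (x y : X) (n : Nd.N x) (a : A.M x y) :
    FNsig A B F Nd x y (ftmk A B F Nd x y n a)
      = dtmk A B F (FNMod A B F Nd) x y (ftmk A B F Nd x x n (A.one x)) a := rfl

/-- The descent datum `F(N)`. -/
def FNDesc (Nd : DModData B) : DescData A B F where
  Md := FNMod A B F Nd
  sig := fun x y t => FNsig A B F Nd x y t

end Descent

section MapLeft

variable {X : Type}

/-- `g ⊗ id` on balanced tensor products. -/
def btMapLeft {S N N' Q : Type} [AddCommGroup N] [Module k N] [AddCommGroup N'] [Module k N']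
    [AddCommGroup Q] [Module k Q]
    (ρ : N → S → N) (ρ' : N' → S → N') (lam : S → Q → Q)
    (g : N →ₗ[k] N') (hg : ∀ n b, g (ρ n b) = ρ' (g n) b) :
    BT k ρ lam →ₗ[k] BT k ρ' lam :=
  btDesc k ρ lam ((btmk k ρ' lam).comp g) (by
    intro n b q
    simp only [LinearMap.comp_apply, hg]
    exact btmk_rel k ρ' lam (g n) b q)

@[simp] theorem btMapLeft_mk {S N N' Q : Type} [AddCommGroup N] [Module k N] [AddCommGroup N']
    [Module k N'] [AddCommGroup Q] [Module k Q]
    (ρ : N → S → N) (ρ' : N' → S → N') (lam : S → Q → Q)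
    (g : N →ₗ[k] N') (hg : ∀ n b, g (ρ n b) = ρ' (g n) b) (n : N) (q : Q) :
    btMapLeft ρ ρ' lam g hg (btmk k ρ lam n q) = btmk k ρ' lam (g n) q := by
  simp [btMapLeft]

end MapLeft

section Descent2

variable {X : Type} (A : KCat k X) (B : DiagAlg k X) (F : XFun B A)

/-- `F(g) = g ⊗ A` for a morphism `g` of diagonal modules. -/
def FNMap (Nd Nd' : DModData B) (g : ∀ x, Nd.N x →ₗ[k] Nd'.N x)
    (hg : ∀ x (n : Nd.N x) (b : B.C x), g x (Nd.ract n b) = Nd'.ract (g x n) b)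
    (x y : X) : FTc A B F Nd x y →ₗ[k] FTc A B F Nd' x y :=
  btMapLeft _ _ _ (g x) (hg x)

/-- `G(M)_x` as a `k`-submodule of `M_{xx}`. -/
def Gsub (D : DescData A B F) (hD : IsDesc A B F D) (x : X) :
    Submodule k (D.Md.M x x) where
  carrier := Gset A B F D x
  add_mem' := by
    intro a b ha hb
    simp only [Gset, Set.mem_setOf_eq] at *
    rw [hD.sig_add, ha, hb]
    simp [map_add]
  zero_mem' := by
    have h0 : D.sig x x (0 : D.Md.M x x) = 0 := by
      have := hD.sig_smul x x (0 : k) 0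
      simpa using this
    simp only [Gset, Set.mem_setOf_eq, h0, map_zero, LinearMap.zero_apply]
  smul_mem' := by
    intro c m hm
    simp only [Gset, Set.mem_setOf_eq] at *
    rw [hD.sig_smul, hm]
    simp [map_smul]

theorem Gsub_closed (D : DescData A B F) (hD : IsDesc A B F D) (x : X)
    (m : D.Md.M x x) (hm : m ∈ Gsub A B F D hD x) (b : B.C x) :
    D.Md.act m (F.i x b) ∈ Gsub A B F D hD x := by
  have hm' : D.sig x x m = dtmk A B F D.Md x x m (A.one x) := hm
  show D.sig x x (D.Md.act m (F.i x b)) = dtmk A B F D.Md x x (D.Md.act m (F.i x b)) (A.one x)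
  rw [hD.c1, hm', dtRmul_mk, A.one_mul]
  rw [btmk_rel k (fun (m : D.Md.M x x) (b : B.C x) => D.Md.act m (F.i x b))
      (fun (b : B.C x) (a : A.M x x) => A.mul (F.i x b) a) m b (A.one x), A.mul_one]

/-- `G(M)` as a diagonal right `B`-module. -/
def GMod (D : DescData A B F) (hD : IsDesc A B F D) : DModData B where
  N := fun x => ↥(Gsub A B F D hD x)
  ract := fun {x} m b => ⟨D.Md.act m.1 (F.i x b), Gsub_closed A B F D hD x m.1 m.2 b⟩

/-- The counit `ε^M : G(M)_x ⊗_{B_x} A_{xy} → M_{xy}`, `m ⊗ a ↦ ma`. -/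
def epsMap (D : DescData A B F) (hD : IsDesc A B F D) (x y : X) :
    FTc A B F (GMod A B F D hD) x y →ₗ[k] D.Md.M x y :=
  btDesc k
    (fun (m : ↥(Gsub A B F D hD x)) (b : B.C x) =>
      (⟨D.Md.act m.1 (F.i x b), Gsub_closed A B F D hD x m.1 m.2 b⟩ : ↥(Gsub A B F D hD x)))
    (fun (b : B.C x) (a : A.M x y) => A.mul (F.i x b) a)
    (LinearMap.mk₂ k (fun (m : ↥(Gsub A B F D hD x)) (a : A.M x y) => D.Md.act m.1 a)
      (by intro m m' a; exact hD.mod.add_act m.1 m'.1 a)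
      (by intro c m a; exact hD.mod.smul_act c m.1 a)
      (by intro m a a'; exact hD.mod.act_add m.1 a a')
      (by intro c m a; exact hD.mod.act_smul c m.1 a))
    (by intro m b a; exact hD.mod.act_assoc m.1 (F.i x b) a)

@[simp] theorem epsMap_mk (D : DescData A B F) (hD : IsDesc A B F D) (x y : X)
    (m : ↥(Gsub A B F D hD x)) (a : A.M x y) :
    epsMap A B F D hD x y (ftmk A B F (GMod A B F D hD) x y m a) = D.Md.act m.1 a := rfl

/-- The unit `η^N_x : N_x → F(N)_{xx}`, `n ↦ n ⊗ 1_x` (its corestriction to `GF(N)` is the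
unit of the adjunction). -/
def etaMap (Nd : DModData B) (x : X) : Nd.N x → FTc A B F Nd x x :=
  fun n => ftmk A B F Nd x x n (A.one x)

end Descent2

section Flat

variable {X : Type} (B : DiagAlg k X)

/-- The axioms of a right module over the `k`-algebra `B_x`. -/
def IsRModOver (x : X) (N : Type) [AddCommGroup N] [Module k N] (ρ : N → B.C x → N) : Prop :=
  (∀ n n' b, ρ (n + n') b = ρ n b + ρ n' b) ∧
  (∀ n b b', ρ n (b + b') = ρ n b + ρ n b') ∧
  (∀ (c : k) n b, ρ (c • n) b = c • ρ n b) ∧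
  (∀ (c : k) n b, ρ n (c • b) = c • ρ n b) ∧
  (∀ n b b', ρ (ρ n b) b' = ρ n (B.mul b b')) ∧
  (∀ n, ρ n (B.one x) = n)

/-- `Q` (with left `B_x`-action `lam`) is flat as a left `B_x`-module:  `- ⊗_{B_x} Q`
preserves injectivity of morphisms of right `B_x`-modules. -/
def LeftFlat (x : X) (Q : Type) [AddCommGroup Q] [Module k Q] (lam : B.C x → Q → Q) : Prop :=
  ∀ (N N' : Type) [AddCommGroup N] [Module k N] [AddCommGroup N'] [Module k N']
    (ρ : N → B.C x → N) (ρ' : N' → B.C x → N'),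
    IsRModOver B x N ρ → IsRModOver B x N' ρ' →
    ∀ (g : N →ₗ[k] N') (hg : ∀ n b, g (ρ n b) = ρ' (g n) b),
      Function.Injective g → Function.Injective (btMapLeft ρ ρ' lam g hg)

/-- `Q` is faithfully flat as a left `B_x`-module: it is flat, and `N ⊗_{B_x} Q = 0`
forces `N = 0`. -/
def LeftFaithfullyFlat (x : X) (Q : Type) [AddCommGroup Q] [Module k Q]
    (lam : B.C x → Q → Q) : Prop :=
  LeftFlat B x Q lam ∧
  ∀ (N : Type) [AddCommGroup N] [Module k N] (ρ : N → B.C x → N), IsRModOver B x N ρ →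
    (∀ t : BT k ρ lam, t = 0) → ∀ n : N, n = 0

end Flat

section Incl

variable {X : Type} (A : KCat k X) (B : DiagAlg k X) (F : XFun B A)

/-- The inclusion `G(M)_x ⊗_{B_x} A_{xy} → M_{xx} ⊗_{B_x} A_{xy}`. -/
def inclMap (D : DescData A B F) (hD : IsDesc A B F D) (x y : X) :
    FTc A B F (GMod A B F D hD) x y →ₗ[k] DTc A B F D.Md x y :=
  btMapLeft (fun (m : (GMod A B F D hD).N x) (b : B.C x) => (GMod A B F D hD).ract m b)
    (fun (m : D.Md.M x x) (b : B.C x) => D.Md.act m (F.i x b))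
    (fun (b : B.C x) (a : A.M x y) => A.mul (F.i x b) a)
    (Gsub A B F D hD x).subtype (fun n b => rfl)

end Incl

/-!
After tensoring with `A_{xx}` the unit splits: `η ⊗ A : N_x ⊗ A_{xx} → (N_x ⊗ A_{xx}) ⊗ A_{xx}` is
the descent map `σ`, which multiplication of the last two factors inverts on the left; and by
flatness `GF(N)_x ⊗ A_{xx}` sits inside `(N_x ⊗ A_{xx}) ⊗ A_{xx}`, where every `m ⊗ a` with
`σ(m) = m ⊗ 1` equals `σ(m a) = (η ⊗ A)(m a)`. A faithfully flat module reflects injectivity and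
surjectivity of `f ⊗ A_{xx}` back to `f`.
-/

section BalancedTensor

variable {S M N P : Type} [AddCommGroup M] [Module k M] [AddCommGroup N] [Module k N]
  [AddCommGroup P] [Module k P] {ρ : M → S → M} {lam : S → N → N}

theorem bt_hom_ext {f g : BT k ρ lam →ₗ[k] P}
    (h : ∀ m n, f (btmk k ρ lam m n) = g (btmk k ρ lam m n)) : f = g :=
  Submodule.linearMap_qext _ (TensorProduct.ext' h)

theorem bt_induction {p : BT k ρ lam → Prop} (zero : p 0) (mk : ∀ m n, p (btmk k ρ lam m n))
    (add : ∀ s t, p s → p t → p (s + t)) (t : BT k ρ lam) : p t := by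
  obtain ⟨s, rfl⟩ := Submodule.mkQ_surjective _ t
  induction s using TensorProduct.induction_on with
  | zero => simpa using zero
  | tmul m n => exact mk m n
  | add s s' hs hs' => rw [map_add]; exact add _ _ hs hs'

theorem bt_eq_zero_of_btmk_eq_zero (h : ∀ m n, btmk k ρ lam m n = 0) (t : BT k ρ lam) :
    t = 0 :=
  LinearMap.congr_fun (bt_hom_ext (f := LinearMap.id) (g := 0) h) t

theorem btMapLeft_btMapLeft_of_comp_eq_zero {S N N' N'' Q : Type} [AddCommGroup N] [Module k N]
    [AddCommGroup N'] [Module k N'] [AddCommGroup N''] [Module k N''] [AddCommGroup Q]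
    [Module k Q] {ρ : N → S → N} {ρ' : N' → S → N'} {ρ'' : N'' → S → N''} {lam : S → Q → Q}
    (g : N →ₗ[k] N') (hg : ∀ n b, g (ρ n b) = ρ' (g n) b)
    (g' : N' →ₗ[k] N'') (hg' : ∀ n b, g' (ρ' n b) = ρ'' (g' n) b) (h : g'.comp g = 0)
    (t : BT k ρ lam) : btMapLeft ρ' ρ'' lam g' hg' (btMapLeft ρ ρ' lam g hg t) = 0 := by
  refine LinearMap.congr_fun (bt_hom_ext (f := (btMapLeft ρ' ρ'' lam g' hg').comp
    (btMapLeft ρ ρ' lam g hg)) (g := 0) fun n q => ?_) t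
  rw [LinearMap.comp_apply, btMapLeft_mk, btMapLeft_mk, ← LinearMap.comp_apply g', h,
    LinearMap.zero_apply, map_zero, LinearMap.zero_apply, LinearMap.zero_apply]

end BalancedTensor

namespace IsRModOver

variable {X : Type} {B : DiagAlg k X} {x : X} {M : Type} [AddCommGroup M] [Module k M]
  {ρ : M → B.C x → M}

def ractLinear (hρ : IsRModOver B x M ρ) (b : B.C x) : M →ₗ[k] M where
  toFun m := ρ m b
  map_add' m m' := hρ.1 m m' b
  map_smul' c m := hρ.2.2.1 c m b

theorem restrict (hρ : IsRModOver B x M ρ) (P : Submodule k M) (hP : ∀ m ∈ P, ∀ b, ρ m b ∈ P) :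
    IsRModOver B x P (fun m b => ⟨ρ m b, hP m m.2 b⟩) := by
  obtain ⟨h1, h2, h3, h4, h5, h6⟩ := hρ
  exact ⟨fun n n' b => Subtype.ext (h1 _ _ _), fun n b b' => Subtype.ext (h2 _ _ _),
    fun c n b => Subtype.ext (h3 _ _ _), fun c n b => Subtype.ext (h4 _ _ _),
    fun n b b' => Subtype.ext (h5 _ _ _), fun n => Subtype.ext (h6 _)⟩

def quotientRact (hρ : IsRModOver B x M ρ) (P : Submodule k M) (hP : ∀ m ∈ P, ∀ b, ρ m b ∈ P)
    (q : M ⧸ P) (b : B.C x) : M ⧸ P :=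
  P.mapQ P (hρ.ractLinear b) (fun m hm => hP m hm b) q

theorem quotientRact_mk (hρ : IsRModOver B x M ρ) (P : Submodule k M)
    (hP : ∀ m ∈ P, ∀ b, ρ m b ∈ P) (m : M) (b : B.C x) :
    hρ.quotientRact P hP (Submodule.Quotient.mk m) b = Submodule.Quotient.mk (ρ m b) :=
  rfl

theorem quotient (hρ : IsRModOver B x M ρ) (P : Submodule k M) (hP : ∀ m ∈ P, ∀ b, ρ m b ∈ P) :
    IsRModOver B x (M ⧸ P) (hρ.quotientRact P hP) := by
  obtain ⟨h1, h2, h3, h4, h5, h6⟩ := id hρ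
  have hs := Submodule.Quotient.mk_surjective P
  refine ⟨fun q q' b => ?_, fun q b b' => ?_, fun c q b => ?_, fun c q b => ?_,
    fun q b b' => ?_, fun q => ?_⟩ <;> obtain ⟨m, rfl⟩ := hs q
  · obtain ⟨m', rfl⟩ := hs q'
    simp only [← Submodule.Quotient.mk_add, quotientRact_mk, h1]
  all_goals simp only [← Submodule.Quotient.mk_add, ← Submodule.Quotient.mk_smul,
    quotientRact_mk, h2, h3, h4, h5, h6]

end IsRModOver

theorem IsDMod.isRModOver {X : Type} {B : DiagAlg k X} {Nd : DModData B} (hNd : IsDMod Nd)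
    (x : X) : IsRModOver B x (Nd.N x) (fun n b => Nd.ract n b) :=
  ⟨hNd.add_ract, hNd.ract_add, hNd.smul_ract, hNd.ract_smul, hNd.ract_assoc, hNd.ract_one⟩

namespace LeftFaithfullyFlat

variable {X : Type} {B : DiagAlg k X} {x : X} {Q : Type} [AddCommGroup Q] [Module k Q]
  {lam : B.C x → Q → Q} {N N' : Type} [AddCommGroup N] [Module k N] [AddCommGroup N']
  [Module k N'] {ρ : N → B.C x → N} {ρ' : N' → B.C x → N'}

theorem injective_of_injective_btMapLeft (hQ : LeftFaithfullyFlat B x Q lam)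
    (hρ : IsRModOver B x N ρ) (hρ' : IsRModOver B x N' ρ') (f : N →ₗ[k] N')
    (hf : ∀ n b, f (ρ n b) = ρ' (f n) b) (h : Function.Injective (btMapLeft ρ ρ' lam f hf)) :
    Function.Injective f := by
  have hker : ∀ m ∈ LinearMap.ker f, ∀ b, ρ m b ∈ LinearMap.ker f := fun m hm b => by
    rw [LinearMap.mem_ker, hf, LinearMap.mem_ker.mp hm]
    exact map_zero (hρ'.ractLinear b)
  have hincl := hQ.1 _ _ _ ρ (hρ.restrict _ hker) hρ _ (fun _ _ => rfl)
    (Submodule.injective_subtype _)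
  have hzero : ∀ t : BT k (fun (m : LinearMap.ker f) b => ⟨ρ m b, hker m m.2 b⟩) lam, t = 0 :=
    fun t => hincl <| h <| by
      rw [map_zero, map_zero]
      exact btMapLeft_btMapLeft_of_comp_eq_zero _ _ _ _ (LinearMap.comp_ker_subtype f) t
  rw [← LinearMap.ker_eq_bot, Submodule.eq_bot_iff]
  exact fun m hm => congrArg Subtype.val (hQ.2 _ _ (hρ.restrict _ hker) hzero ⟨m, hm⟩)

theorem surjective_of_surjective_btMapLeft (hQ : LeftFaithfullyFlat B x Q lam)
    (hρ' : IsRModOver B x N' ρ') (f : N →ₗ[k] N') (hf : ∀ n b, f (ρ n b) = ρ' (f n) b)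
    (h : Function.Surjective (btMapLeft ρ ρ' lam f hf)) : Function.Surjective f := by
  have hrange : ∀ m ∈ LinearMap.range f, ∀ b, ρ' m b ∈ LinearMap.range f := by
    rintro _ ⟨n, rfl⟩ b
    exact ⟨ρ n b, hf n b⟩
  have hzero : ∀ t : BT k (hρ'.quotientRact _ hrange) lam, t = 0 := by
    refine bt_eq_zero_of_btmk_eq_zero fun c q => ?_
    obtain ⟨m, rfl⟩ := (LinearMap.range f).mkQ_surjective c
    obtain ⟨s, hs⟩ := h (btmk k ρ' lam m q)
    rw [← btMapLeft_mk ρ' (hρ'.quotientRact _ hrange) lam _ (fun _ _ => rfl), ← hs]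
    exact btMapLeft_btMapLeft_of_comp_eq_zero _ _ _ _ (LinearMap.range_mkQ_comp f) s
  rw [← LinearMap.range_eq_top, ← Submodule.Quotient.subsingleton_iff]
  exact ⟨fun c c' => (hQ.2 _ _ (hρ'.quotient _ hrange) hzero c).trans
    (hQ.2 _ _ (hρ'.quotient _ hrange) hzero c').symm⟩

end LeftFaithfullyFlat

section Unit

variable {X : Type} (A : KCat k X) (B : DiagAlg k X) (F : XFun B A) (Nd : DModData B)

theorem ftRmul_add {x y z : X} (a a' : A.M y z) :
    ftRmul A B F Nd (x := x) (a + a') = ftRmul A B F Nd a + ftRmul A B F Nd a' :=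
  bt_hom_ext fun n c => by simp [A.mul_add]

theorem ftRmul_smul {x y z : X} (c : k) (a : A.M y z) :
    ftRmul A B F Nd (x := x) (c • a) = c • ftRmul A B F Nd a :=
  bt_hom_ext fun n c' => by simp [A.mul_smul]

theorem ftRmul_ftRmul {x y z w : X} (a : A.M y z) (a' : A.M z w) (t : FTc A B F Nd x y) :
    ftRmul A B F Nd a' (ftRmul A B F Nd a t) = ftRmul A B F Nd (A.mul a a') t :=
  LinearMap.congr_fun (bt_hom_ext (f := (ftRmul A B F Nd a').comp (ftRmul A B F Nd a))
    (g := ftRmul A B F Nd (A.mul a a')) fun n c => by simp [A.mul_assoc]) t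

theorem ftRmul_one {x y : X} (t : FTc A B F Nd x y) : ftRmul A B F Nd (A.one y) t = t :=
  LinearMap.congr_fun (bt_hom_ext (f := ftRmul A B F Nd (A.one y)) (g := LinearMap.id)
    fun n c => by simp [A.mul_one]) t

theorem isRModOver_FTc (x : X) :
    IsRModOver B x (FTc A B F Nd x x) (fun t b => (FNMod A B F Nd).act t (F.i x b)) := by
  refine ⟨fun t t' b => map_add _ t t', fun t b b' => ?_, fun c t b => map_smul _ c t,
    fun c t b => ?_, fun t b b' => ?_, fun t => ?_⟩
  · simp only [FNMod_act, map_add, ftRmul_add, LinearMap.add_apply]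
  · simp only [FNMod_act, map_smul, ftRmul_smul, LinearMap.smul_apply]
  · simp only [FNMod_act, ftRmul_ftRmul, F.i_mul]
  · simp only [FNMod_act, F.i_one, ftRmul_one]

theorem etaLin_ract (x : X) (n : Nd.N x) (b : B.C x) :
    etaLin A B F Nd x (Nd.ract n b) = (FNMod A B F Nd).act (etaLin A B F Nd x n) (F.i x b) := by
  rw [etaLin_apply, etaLin_apply, FNMod_act, ftRmul_mk, A.one_mul]
  conv_rhs => rw [← A.mul_one (F.i x b)]
  exact btmk_rel k _ _ n b (A.one x)

def fnMul (x y : X) : DTc A B F (FNMod A B F Nd) x y →ₗ[k] FTc A B F Nd x y :=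
  btDesc k _ _
    (LinearMap.mk₂ k (fun t a => ftRmul A B F Nd a t) (fun t t' a => map_add _ t t')
      (fun c t a => map_smul _ c t) (fun t a a' => by rw [ftRmul_add]; rfl)
      (fun c t a => by rw [ftRmul_smul]; rfl))
    fun t b a => ftRmul_ftRmul A B F Nd _ _ t

@[simp] theorem fnMul_mk (x y : X) (t : FTc A B F Nd x x) (a : A.M x y) :
    fnMul A B F Nd x y (dtmk A B F (FNMod A B F Nd) x y t a) = ftRmul A B F Nd a t :=
  btDesc_mk k _ _ _ _ t a

theorem fnMul_FNsig (x y : X) (t : FTc A B F Nd x y) :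
    fnMul A B F Nd x y (FNsig A B F Nd x y t) = t :=
  LinearMap.congr_fun (bt_hom_ext (f := (fnMul A B F Nd x y).comp (FNsig A B F Nd x y))
    (g := LinearMap.id) fun n a => by simp [A.one_mul]) t

theorem etaLin_injective (x : X)
    (hff : LeftFaithfullyFlat B x (A.M x x) (fun (b : B.C x) (a : A.M x x) => A.mul (F.i x b) a))
    (hNd : IsDMod Nd) :
    Function.Injective (etaLin A B F Nd x) :=
  hff.injective_of_injective_btMapLeft (hNd.isRModOver x) (isRModOver_FTc A B F Nd x) _
    (etaLin_ract A B F Nd x) (Function.LeftInverse.injective (fnMul_FNsig A B F Nd x x))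

def gfSub (x : X) : Submodule k (FTc A B F Nd x x) :=
  LinearMap.eqLocus (FNsig A B F Nd x x) ((dtmk A B F (FNMod A B F Nd) x x).flip (A.one x))

theorem mem_gfSub {x : X} {t : FTc A B F Nd x x} :
    t ∈ gfSub A B F Nd x ↔
      FNsig A B F Nd x x t = dtmk A B F (FNMod A B F Nd) x x t (A.one x) :=
  Iff.rfl

theorem FNsig_ftRmul {x y z : X} (t : FTc A B F Nd x y) (a : A.M y z) :
    FNsig A B F Nd x z (ftRmul A B F Nd a t)
      = dtRmul A B F (FNMod A B F Nd) a (FNsig A B F Nd x y t) :=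
  LinearMap.congr_fun (bt_hom_ext (f := (FNsig A B F Nd x z).comp (ftRmul A B F Nd a))
    (g := (dtRmul A B F (FNMod A B F Nd) a).comp (FNsig A B F Nd x y)) fun n c => by
      rw [LinearMap.comp_apply, LinearMap.comp_apply, ftRmul_mk, FNsig_mk, FNsig_mk]
      exact (dtRmul_mk A B F (FNMod A B F Nd) a _ c).symm) t

theorem ftRmul_mem_gfSub {x : X} {t : FTc A B F Nd x x} (ht : t ∈ gfSub A B F Nd x)
    (b : B.C x) : ftRmul A B F Nd (F.i x b) t ∈ gfSub A B F Nd x := by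
  rw [mem_gfSub] at ht ⊢
  rw [FNsig_ftRmul, ht]
  erw [dtRmul_mk]
  rw [A.one_mul]
  conv_lhs => rw [← A.mul_one (F.i x b)]
  exact (btmk_rel k _ _ t b (A.one x)).symm

def gfRact (x : X) (t : gfSub A B F Nd x) (b : B.C x) : gfSub A B F Nd x :=
  ⟨ftRmul A B F Nd (F.i x b) t, ftRmul_mem_gfSub A B F Nd t.2 b⟩

theorem isRModOver_gfSub (x : X) : IsRModOver B x (gfSub A B F Nd x) (gfRact A B F Nd x) :=
  (isRModOver_FTc A B F Nd x).restrict _ fun _ ht b => ftRmul_mem_gfSub A B F Nd ht b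

def etaGF (x : X) : Nd.N x →ₗ[k] gfSub A B F Nd x :=
  (etaLin A B F Nd x).codRestrict _ fun _ => mem_gfSub A B F Nd |>.mpr rfl

theorem etaGF_ract (x : X) (n : Nd.N x) (b : B.C x) :
    etaGF A B F Nd x (Nd.ract n b) = gfRact A B F Nd x (etaGF A B F Nd x n) b :=
  Subtype.ext (etaLin_ract A B F Nd x n b)

theorem btMapLeft_etaGF_surjective (x : X)
    (hff : LeftFaithfullyFlat B x (A.M x x) (fun (b : B.C x) (a : A.M x x) => A.mul (F.i x b) a)) :
    Function.Surjective (btMapLeft (fun n b => Nd.ract n b) (gfRact A B F Nd x)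
      (fun (b : B.C x) (a : A.M x x) => A.mul (F.i x b) a) (etaGF A B F Nd x)
      (etaGF_ract A B F Nd x)) := by
  set etaA := btMapLeft (fun n b => Nd.ract n b) (gfRact A B F Nd x)
    (fun (b : B.C x) (a : A.M x x) => A.mul (F.i x b) a) (etaGF A B F Nd x)
    (etaGF_ract A B F Nd x)
  set incl := btMapLeft (gfRact A B F Nd x) (fun t b => (FNMod A B F Nd).act t (F.i x b))
    (fun (b : B.C x) (a : A.M x x) => A.mul (F.i x b) a) (gfSub A B F Nd x).subtype
    (fun _ _ => rfl)
  have hincl : Function.Injective incl := hff.1 _ _ _ _ (isRModOver_gfSub A B F Nd x)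
    (isRModOver_FTc A B F Nd x) _ _ (Submodule.injective_subtype _)
  have hcomp : ∀ t, incl (etaA t) = FNsig A B F Nd x x t :=
    LinearMap.congr_fun (bt_hom_ext (f := incl.comp etaA) (g := FNsig A B F Nd x x)
      fun n a => rfl)
  intro s
  induction s using bt_induction with
  | zero => exact ⟨0, map_zero _⟩
  | mk m a =>
    refine ⟨ftRmul A B F Nd a m.1, hincl ?_⟩
    rw [hcomp, FNsig_ftRmul, (mem_gfSub A B F Nd).mp m.2]
    erw [dtRmul_mk]
    rw [A.one_mul]
    rfl
  | add s s' hs hs' =>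
    obtain ⟨u, rfl⟩ := hs
    obtain ⟨u', rfl⟩ := hs'
    exact ⟨u + u', map_add _ u u'⟩

theorem etaGF_surjective (x : X)
    (hff : LeftFaithfullyFlat B x (A.M x x) (fun (b : B.C x) (a : A.M x x) => A.mul (F.i x b) a)) :
    Function.Surjective (etaGF A B F Nd x) :=
  hff.surjective_of_surjective_btMapLeft (isRModOver_gfSub A B F Nd x) _ _
    (btMapLeft_etaGF_surjective A B F Nd x hff)

end Unit

/-- Proposition 2.4: if `A_{xx}` is faithfully flat as a left
`B_x`-module, then for every diagonal right `B`-module `N` the unit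
`η^N_x : N_x → GF(N)_x`, `n ↦ n ⊗ 1_x`, is bijective. -/
theorem stmt2 {k X : Type} [CommRing k] (A : KCat k X) (B : DiagAlg k X) (F : XFun B A)
    (x : X)
    (hff : LeftFaithfullyFlat B x (A.M x x)
      (fun (b : B.C x) (a : A.M x x) => A.mul (F.i x b) a))
    (Nd : DModData B) (hNd : IsDMod Nd) :
    Function.Bijective (fun n : Nd.N x =>
      (⟨etaMap A B F Nd x n, rfl⟩ : {t // t ∈ Gset A B F (FNDesc A B F Nd) x})) := by
  refine ⟨fun n n' h => etaLin_injective A B F Nd x hff hNd (congrArg Subtype.val h),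
    fun t => ?_⟩
  obtain ⟨n, hn⟩ := etaGF_surjective A B F Nd x hff ⟨t.1, t.2⟩
  exact ⟨n, Subtype.ext (congrArg Subtype.val hn)⟩

end Paper
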